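/- arXiv:0708.1768 — 3 statements merged into one kernel-verified Lean document; each statement's English description precedes it below -/
import Mathlib

section
/- The shift homomorphism d : B_∞ → B_∞ induced by σᵢ ↦ σᵢ₊₁ is injective (a monomorphism). -/
/-- Braid relations for the infinite braid group: generator `i : ℕ` represents σ_{i+1}. -/
def braidRelsInf : Set (FreeGroup ℕ) :=
  {r | ∃ i j : ℕ,
    (j = i + 1 ∧ r = FreeGroup.of i * FreeGroup.of j * FreeGroup.of i *
        (FreeGroup.of j * FreeGroup.of i * FreeGroup.of j)⁻¹) ∨
    (i + 2 ≤ j ∧ r = FreeGroup.of i * FreeGroup.of j * (FreeGroup.of j * FreeGroup.of i)⁻¹)}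

/-- The braid group B_∞ on infinitely many strands. -/
abbrev BInf : Type := PresentedGroup braidRelsInf

/-- `sigmaInf i` is the Artin generator σ_{i+1} of `BInf` (0-indexed). -/
def sigmaInf (i : ℕ) : BInf := PresentedGroup.of i

/-- Braid relations on `n` generators: `B n` below is the braid group B_{n+1} on
n+1 strands; the generator `i : Fin n` represents σ_{i+1}. -/
def braidRels (n : ℕ) : Set (FreeGroup (Fin n)) :=
  {r | ∃ i j : Fin n,
    ((j : ℕ) = (i : ℕ) + 1 ∧ r = FreeGroup.of i * FreeGroup.of j * FreeGroup.of i *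
        (FreeGroup.of j * FreeGroup.of i * FreeGroup.of j)⁻¹) ∨
    ((i : ℕ) + 2 ≤ (j : ℕ) ∧ r = FreeGroup.of i * FreeGroup.of j *
        (FreeGroup.of j * FreeGroup.of i)⁻¹)}

/-- `B n` is the braid group on n+1 strands (the paper's B_{n+1}), with n generators. -/
abbrev B (n : ℕ) : Type := PresentedGroup (braidRels n)

/-- `σ i` for `i : Fin n` is the Artin generator σ_{i+1} of `B n` (0-indexed). -/
def σ {n : ℕ} (i : Fin n) : B n := PresentedGroup.of i

/-- `delta n = σ_n ⋯ σ_1` (the paper's δ_{n+1} when `B n` is the paper's B_{n+1}). -/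
def delta (n : ℕ) : B n := ((List.ofFn (fun i : Fin n => σ i)).reverse).prod

/-- `Delta n = (σ_n ⋯ σ_1)(σ_n ⋯ σ_2) ⋯ (σ_n)`, the paper's Δ_{n+1}. -/
def Delta (n : ℕ) : B n :=
  (List.ofFn (fun k : Fin n =>
    (((List.ofFn (fun i : Fin n => σ i)).reverse).take (n - (k : ℕ))).prod)).prod



-- relation lemmas
lemma rel_one {r : FreeGroup ℕ} (h : r ∈ braidRelsInf) : PresentedGroup.mk braidRelsInf r = 1 := by
  have : r ∈ Subgroup.normalClosure braidRelsInf := Subgroup.subset_normalClosure h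
  exact (QuotientGroup.eq_one_iff r).2 this

lemma braid_rel (i : ℕ) :
    sigmaInf i * sigmaInf (i+1) * sigmaInf i = sigmaInf (i+1) * sigmaInf i * sigmaInf (i+1) := by
  have h : PresentedGroup.mk braidRelsInf
      (FreeGroup.of i * FreeGroup.of (i+1) * FreeGroup.of i *
        (FreeGroup.of (i+1) * FreeGroup.of i * FreeGroup.of (i+1))⁻¹) = 1 :=
    rel_one ⟨i, i+1, Or.inl ⟨rfl, rfl⟩⟩
  simp only [map_mul, map_inv] at h
  have := mul_inv_eq_one.mp h
  exact this

lemma comm_rel {i j : ℕ} (h : i + 2 ≤ j) :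
    sigmaInf i * sigmaInf j = sigmaInf j * sigmaInf i := by
  have h1 : PresentedGroup.mk braidRelsInf
      (FreeGroup.of i * FreeGroup.of j * (FreeGroup.of j * FreeGroup.of i)⁻¹) = 1 :=
    rel_one ⟨i, j, Or.inr ⟨h, rfl⟩⟩
  simp only [map_mul, map_inv] at h1
  exact mul_inv_eq_one.mp h1

/-- D m = σ_m * σ_{m-1} * ⋯ * σ_0 -/
def DD : ℕ → BInf
  | 0 => sigmaInf 0
  | m+1 => sigmaInf (m+1) * DD m

lemma comm_DD {j m : ℕ} (h : m + 2 ≤ j) : sigmaInf j * DD m = DD m * sigmaInf j := by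
  induction m with
  | zero => exact (comm_rel (by omega)).symm
  | succ m ih =>
    have h1 : sigmaInf j * sigmaInf (m+1) = sigmaInf (m+1) * sigmaInf j :=
      (comm_rel (by omega)).symm
    calc sigmaInf j * (sigmaInf (m+1) * DD m)
        = sigmaInf (m+1) * (sigmaInf j * DD m) := by rw [← mul_assoc, h1, mul_assoc]
      _ = sigmaInf (m+1) * (DD m * sigmaInf j) := by rw [ih (by omega)]
      _ = (sigmaInf (m+1) * DD m) * sigmaInf j := by rw [mul_assoc]

lemma shift_DD {i m : ℕ} (h : i + 1 ≤ m) : sigmaInf i * DD m = DD m * sigmaInf (i+1) := by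
  induction m with
  | zero => omega
  | succ m ih =>
    rcases Nat.lt_or_ge (i+1) (m+1) with hlt | hge
    · -- i + 1 ≤ m
      have h1 : sigmaInf i * sigmaInf (m+1) = sigmaInf (m+1) * sigmaInf i :=
        comm_rel (by omega)
      calc sigmaInf i * (sigmaInf (m+1) * DD m)
          = sigmaInf (m+1) * (sigmaInf i * DD m) := by rw [← mul_assoc, h1, mul_assoc]
        _ = sigmaInf (m+1) * (DD m * sigmaInf (i+1)) := by rw [ih (by omega)]
        _ = (sigmaInf (m+1) * DD m) * sigmaInf (i+1) := by rw [mul_assoc]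
    · -- i = m
      have him : i = m := by omega
      subst him
      show sigmaInf i * DD (i+1) = DD (i+1) * sigmaInf (i+1)
      cases i with
      | zero =>
        show sigmaInf 0 * (sigmaInf 1 * sigmaInf 0) = (sigmaInf 1 * sigmaInf 0) * sigmaInf 1
        rw [← mul_assoc, braid_rel 0]
      | succ k =>
        show sigmaInf (k+1) * (sigmaInf (k+2) * (sigmaInf (k+1) * DD k))
            = (sigmaInf (k+2) * (sigmaInf (k+1) * DD k)) * sigmaInf (k+2)
        have hc : sigmaInf (k+2) * DD k = DD k * sigmaInf (k+2) := comm_DD (by omega)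
        calc sigmaInf (k+1) * (sigmaInf (k+2) * (sigmaInf (k+1) * DD k))
            = (sigmaInf (k+1) * sigmaInf (k+2) * sigmaInf (k+1)) * DD k := by
              simp [mul_assoc]
          _ = (sigmaInf (k+2) * sigmaInf (k+1) * sigmaInf (k+2)) * DD k := by
              rw [braid_rel (k+1)]
          _ = sigmaInf (k+2) * (sigmaInf (k+1) * (sigmaInf (k+2) * DD k)) := by
              simp [mul_assoc]
          _ = sigmaInf (k+2) * (sigmaInf (k+1) * (DD k * sigmaInf (k+2))) := by rw [hc]
          _ = (sigmaInf (k+2) * (sigmaInf (k+1) * DD k)) * sigmaInf (k+2) := by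
              simp [mul_assoc]


/-- the shift homomorphism `d : B_∞ → B_∞`, σᵢ ↦ σᵢ₊₁, is injective. -/
theorem shift_homomorphism_injective (d : BInf →* BInf)
    (hd : ∀ i : ℕ, d (sigmaInf i) = sigmaInf (i + 1)) :
    Function.Injective d := by
  have key : ∀ x : BInf, ∃ n : ℕ, ∀ m : ℕ, n ≤ m → x * DD m = DD m * d x := by
    intro x
    let T : Subgroup BInf :=
      { carrier := {x | ∃ n : ℕ, ∀ m : ℕ, n ≤ m → x * DD m = DD m * d x}
        one_mem' := ⟨0, fun m _ => by simp⟩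
        mul_mem' := by
          rintro a b ⟨na, ha⟩ ⟨nb, hb⟩
          refine ⟨max na nb, fun m hm => ?_⟩
          rw [map_mul, mul_assoc, hb m (le_trans (le_max_right _ _) hm), ← mul_assoc,
            ha m (le_trans (le_max_left _ _) hm), mul_assoc]
        inv_mem' := by
          rintro a ⟨na, ha⟩
          refine ⟨na, fun m hm => ?_⟩
          have := ha m hm
          rw [map_inv, eq_comm, mul_inv_eq_iff_eq_mul, mul_assoc, ← this,
            inv_mul_cancel_left] }
    have hx : x ∈ T := PresentedGroup.generated_by braidRelsInf T
      (fun j => ⟨j + 1, fun m hm => by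
        rw [show (PresentedGroup.of j : BInf) = sigmaInf j from rfl, hd j]
        exact shift_DD hm⟩) x
    exact hx
  rw [injective_iff_map_eq_one]
  intro a ha
  obtain ⟨n, hn⟩ := key a
  have := hn n le_rfl
  rw [ha, mul_one] at this
  exact mul_right_cancel (by rw [this, one_mul])
end

section
/- Let p, p', s ∈ B_n ⊂ B_{n+1}. Then p' = s*p holds in B_{n+1} if and only if p' δ_{n+1}⁻¹ = s · (d(p) σ₁ δ_{n+1}⁻¹) · s⁻¹ holds in B_{n+1}, where a*b = a · d(b) · σ₁ · d(a)⁻¹ and δ_{n+1} = σ_n ⋯ σ₁. -/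
/-!
Conjugation by `δ = σ_n ⋯ σ_1` shifts the generators, `σ_i δ = δ σ_{i+1}` for `i < n`: pushing
`σ_i` through the descending product it commutes past the far factors and is turned into
`σ_{i+1}` by the braid relation at `σ_{i+1} σ_i`. Hence `d(x) = δ⁻¹ x δ` for `x ∈ B_n`, so
`s * p = s d(p) σ₁ δ⁻¹ s⁻¹ δ`, and the two equations differ by right multiplication by `δ`.
-/

theorem σ_commute {n : ℕ} {i j : Fin n} (h : (i : ℕ) + 2 ≤ j) : Commute (σ i) (σ j) := by
  have := PresentedGroup.one_of_mem (rels := braidRels n) ⟨i, j, .inr ⟨h, rfl⟩⟩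
  simp only [map_mul, map_inv] at this
  exact mul_inv_eq_one.mp this

theorem σ_braid {n : ℕ} {i j : Fin n} (h : (j : ℕ) = i + 1) :
    σ i * σ j * σ i = σ j * σ i * σ j := by
  have := PresentedGroup.one_of_mem (rels := braidRels n) ⟨i, j, .inl ⟨h, rfl⟩⟩
  simp only [map_mul, map_inv] at this
  exact mul_inv_eq_one.mp this

section DescProd

variable {G : Type*} [Group G]

def descProd (g : ℕ → G) (k : ℕ) : G := ((List.range k).map g).reverse.prod

@[simp] theorem descProd_zero (g : ℕ → G) : descProd g 0 = 1 := rfl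

theorem descProd_succ (g : ℕ → G) (k : ℕ) : descProd g (k + 1) = g k * descProd g k := by
  simp [descProd, List.range_succ]

variable {g : ℕ → G} {n : ℕ}

theorem commute_descProd (hcomm : ∀ i j, i + 2 ≤ j → j < n → Commute (g i) (g j))
    {j : ℕ} (hj : j < n) : ∀ {k}, k < j → Commute (g j) (descProd g k)
  | 0, _ => Commute.one_right _
  | k + 1, hk => by
    rw [descProd_succ]
    exact ((hcomm k j (by omega) hj).symm).mul_right (commute_descProd hcomm hj (by omega))

theorem mul_descProd_eq_descProd_mul_succ (hcomm : ∀ i j, i + 2 ≤ j → j < n → Commute (g i) (g j))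
    (hbraid : ∀ i, i + 1 < n → g i * g (i + 1) * g i = g (i + 1) * g i * g (i + 1))
    {j : ℕ} : ∀ {k}, j + 2 ≤ k → k ≤ n → g j * descProd g k = descProd g k * g (j + 1)
  | k + 1, hjk, hkn => by
    rcases (by omega : k = j + 1 ∨ j + 2 ≤ k) with rfl | hjk
    · have hc := commute_descProd hcomm (j := j + 1) (k := j) hkn (by omega)
      calc g j * descProd g (j + 2)
          = g j * g (j + 1) * g j * descProd g j := by simp only [descProd_succ, mul_assoc]
        _ = g (j + 1) * g j * (g (j + 1) * descProd g j) := by rw [hbraid j hkn]; group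
        _ = descProd g (j + 2) * g (j + 1) := by rw [hc.eq]; simp only [descProd_succ, mul_assoc]
    · rw [descProd_succ, ← mul_assoc, (hcomm j k (by omega) (by omega)).eq, mul_assoc,
        mul_descProd_eq_descProd_mul_succ hcomm hbraid (by omega) (by omega), mul_assoc]

end DescProd

def σℕ (n k : ℕ) : B n := if h : k < n then σ ⟨k, h⟩ else 1

theorem σℕ_of_lt {n k : ℕ} (h : k < n) : σℕ n k = σ ⟨k, h⟩ := dif_pos h

theorem delta_eq_descProd (n : ℕ) : delta n = descProd (σℕ n) n := by
  rw [delta, descProd]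
  congr 2
  refine List.ext_getElem (by simp) fun i h₁ h₂ => ?_
  simp only [List.getElem_ofFn, List.getElem_map, List.getElem_range]
  rw [σℕ_of_lt]

theorem σ_castSucc_mul_delta {m : ℕ} (i : Fin m) :
    σ i.castSucc * delta (m + 1) = delta (m + 1) * σ i.succ := by
  have := mul_descProd_eq_descProd_mul_succ (g := σℕ (m + 1)) (n := m + 1) (j := i) (k := m + 1)
    (fun i j hij hj => by rw [σℕ_of_lt hj, σℕ_of_lt (by omega)]; exact σ_commute hij)
    (fun i hi => by rw [σℕ_of_lt hi, σℕ_of_lt (by omega)]; exact σ_braid rfl)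
    (by omega) le_rfl
  rwa [σℕ_of_lt (by omega), σℕ_of_lt (by omega), ← delta_eq_descProd] at this

theorem shift_eq_conj_delta {m : ℕ} (ι d : B m →* B (m + 1))
    (hι : ∀ i : Fin m, ι (σ i) = σ i.castSucc)
    (hd : ∀ i : Fin m, d (σ i) = σ i.succ) (x : B m) :
    d x = (delta (m + 1))⁻¹ * ι x * delta (m + 1) := by
  have : d = (MulAut.conj (delta (m + 1))⁻¹).toMonoidHom.comp ι :=
    PresentedGroup.ext fun i => by
      change d (σ i) = (delta (m + 1))⁻¹ * ι (σ i) * (delta (m + 1))⁻¹⁻¹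
      rw [hd, hι, inv_inv, mul_assoc, σ_castSucc_mul_delta, inv_mul_cancel_left]
  simp [this]

/-- Proposition 1 of the paper. Here `B (m+1)` is the paper's B_{n+1}
(with n = m+1) and `B m` is the paper's B_n; `ι : B m →* B (m+1)` is the natural
inclusion and `d` the shift homomorphism. For p, p', s ∈ B_n:
p' = s*p in B_{n+1} iff p'δ_{n+1}⁻¹ = s (d(p)σ₁δ_{n+1}⁻¹) s⁻¹ in B_{n+1}. -/
theorem shifted_conjugacy_iff_conjugacy (m : ℕ) (ι d : B m →* B (m + 1))
    (hι : ∀ i : Fin m, ι (σ i) = σ i.castSucc)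
    (hd : ∀ i : Fin m, d (σ i) = σ i.succ)
    (p p' s : B m) :
    ι p' = ι s * d p * σ (0 : Fin (m + 1)) * (d s)⁻¹ ↔
    ι p' * (delta (m + 1))⁻¹ =
      ι s * (d p * σ (0 : Fin (m + 1)) * (delta (m + 1))⁻¹) * (ι s)⁻¹ := by
  have hstar : ι s * d p * σ 0 * (d s)⁻¹ =
      ι s * (d p * σ 0 * (delta (m + 1))⁻¹) * (ι s)⁻¹ * delta (m + 1) := by
    rw [shift_eq_conj_delta ι d hι hd s]; group
  rw [hstar, mul_inv_eq_iff_eq_mul]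
end

section
/- For p ∈ B_n, the three elements c₁ = Δ_{n+1}², c₂ = d(p) σ₂⁻¹ ⋯ σ_n⁻¹, and c₃ = σ₁ ⋯ σ_{n−1} σ_n² σ_{n−1} ⋯ σ₁ of B_{n+1} pairwise commute, so the subgroup C' = ⟨c₁, c₂, c₃⟩ is abelian. -/
namespace Braid

variable {G : Type*} [Group G] {f : ℕ → G} {n : ℕ}

def descWord (f : ℕ → G) (b : ℕ) : ℕ → G
  | 0 => 1
  | l + 1 => f (b + l) * descWord f b l

def ascWord (f : ℕ → G) (b : ℕ) : ℕ → G
  | 0 => 1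
  | l + 1 => ascWord f b l * f (b + l)

def garside : ℕ → (ℕ → G) → G
  | 0, _ => 1
  | n + 1, f => descWord f 0 (n + 1) * garside n (fun i => f (i + 1))

structure IsBraidFamily (f : ℕ → G) (n : ℕ) : Prop where
  commute : ∀ i j, i + 2 ≤ j → j < n → Commute (f i) (f j)
  braid : ∀ i, i + 2 ≤ n → f i * f (i + 1) * f i = f (i + 1) * f i * f (i + 1)

namespace IsBraidFamily

theorem shift (hf : IsBraidFamily f (n + 1)) : IsBraidFamily (fun i => f (i + 1)) n where
  commute i j hij hj := hf.commute (i + 1) (j + 1) (by omega) (by omega)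
  braid i hi := hf.braid (i + 1) (by omega)

theorem mono (hf : IsBraidFamily f n) {m : ℕ} (hm : m ≤ n) : IsBraidFamily f m where
  commute i j hij hj := hf.commute i j hij (by omega)
  braid i hi := hf.braid i (by omega)

theorem op (hf : IsBraidFamily f n) : IsBraidFamily (fun i => MulOpposite.op (f i)) n where
  commute i j hij hj := (hf.commute i j hij hj).op
  braid i hi := by
    simpa only [← MulOpposite.op_mul, mul_assoc] using congrArg MulOpposite.op (hf.braid i hi)

end IsBraidFamily

/- Reversing words, i.e. passing to `Gᵐᵒᵖ`, exchanges `ascWord` and `descWord` and preserves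
the braid relations; this turns each `descWord` lemma into an `ascWord` lemma. -/
theorem descWord_op (f : ℕ → G) (b l : ℕ) :
    descWord (fun i => MulOpposite.op (f i)) b l = MulOpposite.op (ascWord f b l) := by
  induction l with
  | zero => rfl
  | succ l ih => simp only [descWord, ascWord, ih, MulOpposite.op_mul]

theorem ascWord_comp_succ (f : ℕ → G) (b l : ℕ) :
    ascWord (fun i => f (i + 1)) b l = ascWord f (b + 1) l := by
  induction l with
  | zero => rfl
  | succ l ih => simp only [ascWord, ih, Nat.add_right_comm]

theorem commute_descWord (hf : IsBraidFamily f n) {b l j : ℕ} (hj : b + l + 1 ≤ j)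
    (hjn : j < n) : Commute (f j) (descWord f b l) := by
  induction l with
  | zero => exact Commute.one_right _
  | succ l ih => exact ((hf.commute _ _ (by omega) hjn).symm).mul_right (ih (by omega))

theorem descWord_mul (hf : IsBraidFamily f n) {b l i : ℕ} (hb : b ≤ i) (hi : i + 2 ≤ b + l)
    (hl : b + l ≤ n) : descWord f b l * f (i + 1) = f i * descWord f b l := by
  induction l with
  | zero => omega
  | succ l ih =>
    obtain hlt | hle := lt_or_ge (i + 2) (b + l + 1)
    · rw [descWord, mul_assoc, ih (by omega) (by omega), ← mul_assoc,
        (hf.commute i (b + l) (by omega) (by omega)).eq.symm, mul_assoc]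
    obtain ⟨k, rfl⟩ : ∃ k, l = k + 1 := ⟨l - 1, by omega⟩
    obtain rfl : i = b + k := by omega
    have hcomm := commute_descWord hf (b := b) (l := k) (j := b + k + 1) le_rfl (by omega)
    simp only [descWord, ← add_assoc, mul_assoc, ← hcomm.eq]
    simp only [← mul_assoc, hf.braid (b + k) (by omega)]

theorem ascWord_mul (hf : IsBraidFamily f n) {b l i : ℕ} (hb : b ≤ i) (hi : i + 2 ≤ b + l)
    (hl : b + l ≤ n) : ascWord f b l * f i = f (i + 1) * ascWord f b l := by
  have h := congrArg MulOpposite.unop (descWord_mul hf.op hb hi hl)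
  simpa only [descWord_op, MulOpposite.unop_mul, MulOpposite.unop_op] using h.symm

theorem descWord_mul_ascWord (hf : IsBraidFamily f n) {k l : ℕ} (hl : l < k) (hk : k ≤ n) :
    descWord f 0 k * ascWord f 1 l = ascWord f 0 l * descWord f 0 k := by
  induction l with
  | zero => simp only [ascWord, mul_one, one_mul]
  | succ l ih =>
    rw [ascWord, ← mul_assoc, ih (by omega), Nat.add_comm 1 l, mul_assoc,
      descWord_mul hf (Nat.zero_le l) (by omega) (by omega), ← mul_assoc, ascWord, Nat.zero_add]

theorem garside_succ (hf : IsBraidFamily f (n + 1)) :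
    garside (n + 1) f = ascWord f 0 (n + 1) * garside n f := by
  induction n generalizing f with
  | zero => simp only [garside, descWord, ascWord, mul_one, one_mul]
  | succ n ih =>
    rw [garside, ih hf.shift, ascWord_comp_succ, ← mul_assoc,
      descWord_mul_ascWord hf (by omega) le_rfl, garside, descWord, ascWord.eq_2 _ _ (n + 1)]
    simp only [mul_assoc, Nat.zero_add]

theorem garside_mul (hf : IsBraidFamily f n) {i j : ℕ} (hij : i + j + 1 = n) :
    garside n f * f i = f j * garside n f := by
  induction n generalizing f i j with
  | zero => omega
  | succ n ih =>
    rcases i with _ | i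
    · rcases n with _ | n
      · obtain rfl : j = 0 := by omega
        simp only [garside, descWord, mul_one]
      rw [garside_succ hf, mul_assoc, ih (hf.mono (by omega)) (i := 0) (j := n) (by omega),
        ← mul_assoc, ascWord_mul hf (Nat.zero_le n) (by omega) (by omega), mul_assoc]
      obtain rfl : j = n + 1 := by omega
      rfl
    · rw [garside, mul_assoc, ih hf.shift (i := i) (j := j) (by omega), ← mul_assoc,
        descWord_mul hf (Nat.zero_le j) (by omega) (by omega), mul_assoc]

theorem commute_garside_sq (hf : IsBraidFamily f n) {i : ℕ} (hi : i < n) :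
    Commute (garside n f ^ 2) (f i) := by
  obtain ⟨j, hij⟩ : ∃ j, i + j + 1 = n := ⟨n - 1 - i, by omega⟩
  rw [Commute, SemiconjBy, sq, mul_assoc, garside_mul hf hij, ← mul_assoc,
    garside_mul hf (by omega : j + i + 1 = n), mul_assoc]

theorem commute_ascWord_mul_descWord (hf : IsBraidFamily f n) {j : ℕ} (hj : j + 1 < n) :
    Commute (ascWord f 0 n * descWord f 0 n) (f (j + 1)) := by
  rw [Commute, SemiconjBy, mul_assoc, descWord_mul hf (Nat.zero_le j) (by omega) (by omega),
    ← mul_assoc, ascWord_mul hf (Nat.zero_le j) (by omega) (by omega), mul_assoc]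

theorem prod_ofFn_eq_ascWord (f : ℕ → G) (n : ℕ) :
    (List.ofFn fun i : Fin n => f i).prod = ascWord f 0 n := by
  induction n with
  | zero => rfl
  | succ n ih =>
    rw [List.ofFn_succ', List.prod_concat]
    simp only [Fin.val_castSucc, Fin.val_last, ih, ascWord, Nat.zero_add]

theorem prod_reverse_ofFn_eq_descWord (f : ℕ → G) (n : ℕ) :
    (List.ofFn fun i : Fin n => f i).reverse.prod = descWord f 0 n := by
  induction n with
  | zero => rfl
  | succ n ih =>
    rw [List.ofFn_succ', List.concat_eq_append, List.reverse_append, List.prod_append]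
    simp only [Fin.val_castSucc, Fin.val_last, ih, descWord, Nat.zero_add, List.reverse_singleton,
      List.prod_singleton]

theorem garside_eq_prod_ofFn (n : ℕ) (f : ℕ → G) :
    garside n f = (List.ofFn fun k : Fin n =>
      ((List.ofFn fun i : Fin n => f i).reverse.take (n - k)).prod).prod := by
  induction n generalizing f with
  | zero => rfl
  | succ n ih =>
    have htake (k : ℕ) (hk : k ≤ n) : (List.ofFn fun i : Fin (n + 1) => f i).reverse.take k =
        (List.ofFn fun i : Fin n => f (i + 1)).reverse.take k := by
      rw [List.ofFn_succ, List.reverse_cons, List.take_append_of_le_length (by simpa using hk)]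
      simp
    rw [List.ofFn_succ, List.prod_cons, garside, ih]
    congr 1
    · rw [Fin.val_zero, Nat.sub_zero, List.take_of_length_le (by simp),
        prod_reverse_ofFn_eq_descWord]
    · refine congrArg List.prod (congrArg List.ofFn (funext fun k => ?_))
      rw [Fin.val_succ, Nat.add_sub_add_right, htake _ (Nat.sub_le n k)]

end Braid

open Braid

theorem PresentedGroup.mem_center_of_forall_commute_of {α : Type*} {rels : Set (FreeGroup α)}
    {g : PresentedGroup rels} (hg : ∀ a, Commute g (PresentedGroup.of a)) :
    g ∈ Subgroup.center (PresentedGroup rels) := by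
  rw [← Subgroup.centralizer_univ, ← Subgroup.coe_top, ← PresentedGroup.closure_range_of,
    Subgroup.centralizer_closure]
  rintro _ ⟨a, rfl⟩
  exact (hg a).symm

theorem sigma_braid {n : ℕ} (i j : Fin n) (h : (j : ℕ) = i + 1) :
    σ i * σ j * σ i = σ j * σ i * σ j := by
  have := PresentedGroup.one_of_mem (rels := braidRels n) ⟨i, j, Or.inl ⟨h, rfl⟩⟩
  rwa [map_mul, map_inv, mul_inv_eq_one] at this

theorem sigma_commute {n : ℕ} (i j : Fin n) (h : (i : ℕ) + 2 ≤ j) : Commute (σ i) (σ j) := by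
  have := PresentedGroup.one_of_mem (rels := braidRels n) ⟨i, j, Or.inr ⟨h, rfl⟩⟩
  rwa [map_mul, map_inv, mul_inv_eq_one] at this

def sigmaNat (n j : ℕ) : B n := if h : j < n then σ ⟨j, h⟩ else 1

theorem sigmaNat_val {n : ℕ} (i : Fin n) : sigmaNat n i = σ i := dif_pos i.isLt

theorem isBraidFamily_sigmaNat (n : ℕ) : IsBraidFamily (sigmaNat n) n where
  commute i j hij hj := by
    simpa only [sigmaNat, dif_pos hj, dif_pos (by omega : i < n)] using
      sigma_commute ⟨i, by omega⟩ ⟨j, hj⟩ hij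
  braid i hi := by
    simpa only [sigmaNat, dif_pos (by omega : i < n), dif_pos (by omega : i + 1 < n)] using
      sigma_braid ⟨i, by omega⟩ ⟨i + 1, by omega⟩ rfl

theorem Delta_eq_garside (n : ℕ) : Delta n = garside n (sigmaNat n) := by
  simp only [Delta, garside_eq_prod_ofFn, sigmaNat_val]

theorem Delta_sq_mem_center (n : ℕ) : Delta n ^ 2 ∈ Subgroup.center (B n) :=
  PresentedGroup.mem_center_of_forall_commute_of fun i => by
    rw [Delta_eq_garside, show PresentedGroup.of i = sigmaNat n i from (sigmaNat_val i).symm]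
    exact commute_garside_sq (isBraidFamily_sigmaNat n) i.isLt

theorem apply_mem_closure_sigma_succ {m : ℕ} (d : B m →* B (m + 1))
    (hd : ∀ i : Fin m, d (σ i) = σ i.succ) (p : B m) :
    d p ∈ Subgroup.closure (Set.range fun i : Fin m => σ i.succ) := by
  have hrange : d.range ≤ Subgroup.closure (Set.range fun i : Fin m => σ i.succ) := by
    rw [MonoidHom.range_eq_map, ← PresentedGroup.closure_range_of, MonoidHom.map_closure]
    refine Subgroup.closure_mono ?_
    rintro _ ⟨_, ⟨i, rfl⟩, rfl⟩
    exact ⟨i, (hd i).symm⟩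
  exact hrange ⟨p, rfl⟩

theorem prod_inv_drop_one_mem_closure_sigma_succ (m : ℕ) :
    (((List.ofFn fun i : Fin (m + 1) => σ i).drop 1).map fun x => x⁻¹).prod ∈
      Subgroup.closure (Set.range fun i : Fin m => σ i.succ) := by
  rw [List.ofFn_succ, List.drop_one, List.tail_cons]
  refine list_prod_mem fun x hx => ?_
  obtain ⟨i, rfl⟩ : ∃ i : Fin m, (σ i.succ)⁻¹ = x := by simpa using hx
  exact inv_mem (Subgroup.subset_closure ⟨i, rfl⟩)

theorem mem_centralizer_sigma_succ (m : ℕ) :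
    (List.ofFn fun i : Fin (m + 1) => σ i).prod *
        (List.ofFn fun i : Fin (m + 1) => σ i).reverse.prod ∈
      Subgroup.centralizer (Set.range fun i : Fin m => σ i.succ) := by
  rintro _ ⟨i, rfl⟩
  simp only [← sigmaNat_val, prod_ofFn_eq_ascWord, prod_reverse_ofFn_eq_descWord, Fin.val_succ]
  exact (commute_ascWord_mul_descWord (isBraidFamily_sigmaNat (m + 1)) (by omega)).symm

/-- Proposition 3, second part. With `B (m+1)` the paper's B_{n+1}
(n = m+1), `B m` the paper's B_n and `d` the shift homomorphism: for p ∈ B_n, the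
elements c₁ = Δ_{n+1}², c₂ = d(p)σ₂⁻¹⋯σ_n⁻¹, c₃ = σ₁⋯σ_{n−1}σ_n²σ_{n−1}⋯σ₁
pairwise commute, hence the subgroup C' = ⟨c₁,c₂,c₃⟩ is abelian. -/
theorem c1_c2_c3_generate_abelian (m : ℕ) (d : B m →* B (m + 1))
    (hd : ∀ i : Fin m, d (σ i) = σ i.succ) (p : B m)
    (c₁ c₂ c₃ : B (m + 1))
    (hc₁ : c₁ = (Delta (m + 1)) ^ 2)
    (hc₂ : c₂ = d p *
        (((List.ofFn (fun i : Fin (m + 1) => σ i)).drop 1).map (fun x => x⁻¹)).prod)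
    (hc₃ : c₃ = (List.ofFn (fun i : Fin (m + 1) => σ i)).prod *
        ((List.ofFn (fun i : Fin (m + 1) => σ i)).reverse).prod) :
    (c₁ * c₂ = c₂ * c₁ ∧ c₁ * c₃ = c₃ * c₁ ∧ c₂ * c₃ = c₃ * c₂) ∧
    ∀ x ∈ Subgroup.closure {c₁, c₂, c₃}, ∀ y ∈ Subgroup.closure {c₁, c₂, c₃},
      x * y = y * x := by
  have hc₁_center : c₁ ∈ Subgroup.center (B (m + 1)) := hc₁ ▸ Delta_sq_mem_center (m + 1)
  have hc₂_mem : c₂ ∈ Subgroup.closure (Set.range fun i : Fin m => σ i.succ) :=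
    hc₂ ▸ mul_mem (apply_mem_closure_sigma_succ d hd p)
      (prod_inv_drop_one_mem_closure_sigma_succ m)
  have hc₃_mem :
      c₃ ∈ Subgroup.centralizer (Subgroup.closure (Set.range fun i : Fin m => σ i.succ)) := by
    rw [Subgroup.centralizer_closure, hc₃]
    exact mem_centralizer_sigma_succ m
  have h₁₂ : c₁ * c₂ = c₂ * c₁ := (Subgroup.mem_center_iff.1 hc₁_center c₂).symm
  have h₁₃ : c₁ * c₃ = c₃ * c₁ := (Subgroup.mem_center_iff.1 hc₁_center c₃).symm
  have h₂₃ : c₂ * c₃ = c₃ * c₂ := hc₃_mem c₂ hc₂_mem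
  refine ⟨⟨h₁₂, h₁₃, h₂₃⟩, fun x hx y hy => ?_⟩
  have := Subgroup.isMulCommutative_closure (k := {c₁, c₂, c₃}) <| by
    simp only [Set.mem_insert_iff, Set.mem_singleton_iff]
    rintro x (rfl | rfl | rfl) y (rfl | rfl | rfl) <;>
      first | rfl | assumption | exact Eq.symm ‹_›
  exact Subgroup.le_centralizer _ hy x hx
end
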